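/- arXiv:2203.02904 — 4 statements merged into one kernel-verified Lean document; each statement's English description precedes it below -/
import Mathlib

section
/- Let M and X be metric spaces with M having at least 3 points, s(M) > 0 and e(M) > 0, and let ε be a real number with 0 < ε ≤ s(M)/4 and ε < e(M)/4. Then any two correspondences R, R' between M and X with dis R < 2ε and dis R' < 2ε are equal as subsets of M × X. Consequently, if R is a correspondence with dis R < 2ε, then dis R = inf{dis S : S a correspondence between M and X}, i.e., R is an optimal correspondence realizing 2·d_GH(M,X). -/
/-!
Compose `R` with the inverse of `R'`: this is a correspondence of `M` with itself of distortion
`< 4ε`. As distinct points of `M` are at least `4ε` apart, it is the graph of a bijection of `M`,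
whose distortion is also `< 4ε < e(M)`, so the bijection is the identity. Hence a point related
to `x` under `R'` is also related to `x` under `R`, which gives `R ⊆ R'`, and `R = R'` by symmetry.
Optimality follows: a correspondence with distortion `< 2ε` is `R` itself, and any other has
distortion `≥ 2ε > dis R`.
-/

open ENNReal

/-- A correspondence between `A` and `B`: a relation whose projections are surjective. -/
def IsCorr {A B : Type*} (R : Set (A × B)) : Prop :=
  (∀ a, ∃ b, (a, b) ∈ R) ∧ ∀ b, ∃ a, (a, b) ∈ R

/-- Distortion of a relation between metric spaces, a value in `[0,∞]`. -/
noncomputable def disMS {A B : Type*} [MetricSpace A] [MetricSpace B]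
    (σ : Set (A × B)) : ℝ≥0∞ :=
  ⨆ p ∈ σ, ⨆ q ∈ σ, ENNReal.ofReal |dist p.1 q.1 - dist p.2 q.2|

/-- `s(M) = inf{dist(x,x') : x ≠ x'}`. -/
noncomputable def sSpace (M : Type*) [MetricSpace M] : ℝ :=
  sInf {r : ℝ | ∃ x y : M, x ≠ y ∧ r = dist x y}

/-- `e(M) = inf{dis f : f : M ≃ M, f ≠ id}`, a value in `[0,∞]`. -/
noncomputable def eSpace (M : Type*) [MetricSpace M] : ℝ≥0∞ :=
  ⨅ f ∈ {f : M ≃ M | f ≠ Equiv.refl M},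
    ⨆ x : M, ⨆ y : M, ENNReal.ofReal |dist (f x) (f y) - dist x y|

open SetRel

namespace IsCorr

variable {A B C : Type*}

lemma inv {R : Set (A × B)} (hR : IsCorr R) : IsCorr (SetRel.inv R) :=
  ⟨hR.2, hR.1⟩

lemma comp {R : Set (A × B)} {S : Set (B × C)} (hR : IsCorr R) (hS : IsCorr S) :
    IsCorr (R ○ S) := by
  refine ⟨fun a => ?_, fun c => ?_⟩
  · obtain ⟨b, hab⟩ := hR.1 a
    obtain ⟨c, hbc⟩ := hS.1 b
    exact ⟨c, b, hab, hbc⟩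
  · obtain ⟨b, hbc⟩ := hS.2 c
    obtain ⟨a, hab⟩ := hR.2 b
    exact ⟨a, b, hab, hbc⟩

noncomputable def toEquiv {T : Set (A × B)} (hT : IsCorr T)
    (hfun : ∀ ⦃a b b'⦄, (a, b) ∈ T → (a, b') ∈ T → b = b')
    (hinj : ∀ ⦃a a' b⦄, (a, b) ∈ T → (a', b) ∈ T → a = a') : A ≃ B where
  toFun a := (hT.1 a).choose
  invFun b := (hT.2 b).choose
  left_inv a := hinj (hT.2 _).choose_spec (hT.1 a).choose_spec
  right_inv b := hfun (hT.1 _).choose_spec (hT.2 b).choose_spec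

lemma mem_toEquiv {T : Set (A × B)} (hT : IsCorr T)
    (hfun : ∀ ⦃a b b'⦄, (a, b) ∈ T → (a, b') ∈ T → b = b')
    (hinj : ∀ ⦃a a' b⦄, (a, b) ∈ T → (a', b) ∈ T → a = a') (a : A) :
    (a, hT.toEquiv hfun hinj a) ∈ T :=
  (hT.1 a).choose_spec

end IsCorr

section Distortion

variable {A B C : Type*} [MetricSpace A] [MetricSpace B] [MetricSpace C]

lemma ofReal_le_disMS {σ : Set (A × B)} {p q : A × B} (hp : p ∈ σ) (hq : q ∈ σ) :
    ENNReal.ofReal |dist p.1 q.1 - dist p.2 q.2| ≤ disMS σ :=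
  le_iSup₂_of_le p hp (le_iSup₂_of_le q hq le_rfl)

lemma disMS_inv (σ : Set (A × B)) : disMS (SetRel.inv σ) = disMS σ := by
  refine le_antisymm (iSup₂_le fun p hp => iSup₂_le fun q hq => ?_)
    (iSup₂_le fun p hp => iSup₂_le fun q hq => ?_)
  · rw [abs_sub_comm]
    exact ofReal_le_disMS (p := p.swap) (q := q.swap) hp hq
  · rw [abs_sub_comm]
    exact ofReal_le_disMS (σ := SetRel.inv σ) (p := p.swap) (q := q.swap) hp hq

lemma disMS_comp_le (R : Set (A × B)) (S : Set (B × C)) :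
    disMS (R ○ S) ≤ disMS R + disMS S := by
  refine iSup₂_le fun ⟨a, c⟩ ⟨b, hab, hbc⟩ => iSup₂_le fun ⟨a', c'⟩ ⟨b', hab', hbc'⟩ => ?_
  calc ENNReal.ofReal |dist a a' - dist c c'|
      ≤ ENNReal.ofReal (|dist a a' - dist b b'| + |dist b b' - dist c c'|) :=
        ENNReal.ofReal_le_ofReal (abs_sub_le _ _ _)
    _ ≤ ENNReal.ofReal |dist a a' - dist b b'| + ENNReal.ofReal |dist b b' - dist c c'| :=
        ENNReal.ofReal_add_le
    _ ≤ disMS R + disMS S :=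
        add_le_add (ofReal_le_disMS (p := (a, b)) hab hab') (ofReal_le_disMS (p := (b, c)) hbc hbc')

lemma sSpace_le_dist {x y : A} (h : x ≠ y) : sSpace A ≤ dist x y := by
  refine csInf_le ⟨0, ?_⟩ ⟨x, y, h, rfl⟩
  rintro r ⟨a, b, -, rfl⟩
  exact dist_nonneg

lemma eq_of_mem_of_disMS_lt_sSpace {T : Set (A × B)} (hT : disMS T < ENNReal.ofReal (sSpace B))
    {a : A} {b b' : B} (hb : (a, b) ∈ T) (hb' : (a, b') ∈ T) : b = b' := by
  by_contra hne
  have hlt : ENNReal.ofReal |dist a a - dist b b'| < ENNReal.ofReal (sSpace B) :=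
    (ofReal_le_disMS hb hb').trans_lt hT
  rw [dist_self, zero_sub, abs_neg, abs_dist, ENNReal.ofReal_lt_ofReal_iff'] at hlt
  exact (sSpace_le_dist hne).not_gt hlt.1

lemma iSup_dist_le_disMS {T : Set (A × B)} (f : A → B) (hf : ∀ a, (a, f a) ∈ T) :
    ⨆ x, ⨆ y, ENNReal.ofReal |dist (f x) (f y) - dist x y| ≤ disMS T :=
  iSup₂_le fun x y => by
    rw [abs_sub_comm]
    exact ofReal_le_disMS (hf x) (hf y)

end Distortion

section Rigidity

variable {M X : Type*} [MetricSpace M] [MetricSpace X]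

lemma IsCorr.eq_of_mem_of_disMS_lt {T : Set (M × M)} (hT : IsCorr T)
    (hs : disMS T < ENNReal.ofReal (sSpace M)) (he : disMS T < eSpace M)
    {a b : M} (hab : (a, b) ∈ T) : a = b := by
  have hfun : ∀ ⦃a b b'⦄, (a, b) ∈ T → (a, b') ∈ T → b = b' := fun _ _ _ =>
    eq_of_mem_of_disMS_lt_sSpace hs
  have hinj : ∀ ⦃a a' b⦄, (a, b) ∈ T → (a', b) ∈ T → a = a' := fun _ _ _ h h' =>
    eq_of_mem_of_disMS_lt_sSpace (T := SetRel.inv T) (by rwa [disMS_inv]) h h'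
  set f := hT.toEquiv hfun hinj
  have hf : f = Equiv.refl M := by
    by_contra hne
    exact (iInf₂_le f hne |>.trans (iSup_dist_le_disMS f (hT.mem_toEquiv hfun hinj))).not_gt he
  have haf : (a, f a) ∈ T := hT.mem_toEquiv hfun hinj a
  rw [hf, Equiv.refl_apply] at haf
  exact hfun haf hab

lemma IsCorr.subset_of_disMS_add_lt {R R' : Set (M × X)} (hR : IsCorr R) (hR' : IsCorr R')
    (hs : disMS R + disMS R' < ENNReal.ofReal (sSpace M)) (he : disMS R + disMS R' < eSpace M) :
    R ⊆ R' := by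
  have hT : IsCorr (R ○ SetRel.inv R') := hR.comp hR'.inv
  have hdis : disMS (R ○ SetRel.inv R') ≤ disMS R + disMS R' := by
    simpa only [disMS_inv] using disMS_comp_le R (SetRel.inv R')
  rintro ⟨m, x⟩ hmx
  obtain ⟨m', hm'x⟩ := hR'.2 x
  obtain rfl : m = m' :=
    hT.eq_of_mem_of_disMS_lt (hdis.trans_lt hs) (hdis.trans_lt he) ⟨x, hmx, hm'x⟩
  exact hm'x

lemma IsCorr.subset_of_disMS_lt (ε : ℝ) (hε1 : ε ≤ sSpace M / 4)
    (hε2 : ENNReal.ofReal ε < eSpace M / 4) {R R' : Set (M × X)} (hR : IsCorr R) (hR' : IsCorr R')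
    (hdR : disMS R < ENNReal.ofReal (2 * ε)) (hdR' : disMS R' < ENNReal.ofReal (2 * ε)) :
    R ⊆ R' := by
  have hsum : disMS R + disMS R' < 4 * ENNReal.ofReal ε := by
    have h2 : ENNReal.ofReal (2 * ε) = 2 * ENNReal.ofReal ε := by
      rw [ENNReal.ofReal_mul zero_le_two, ENNReal.ofReal_ofNat]
    calc disMS R + disMS R' < 2 * ENNReal.ofReal ε + 2 * ENNReal.ofReal ε := by
          rw [← h2]; exact ENNReal.add_lt_add hdR hdR'
      _ = 4 * ENNReal.ofReal ε := by ring
  have hs : 4 * ENNReal.ofReal ε ≤ ENNReal.ofReal (sSpace M) := by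
    rw [← ENNReal.ofReal_ofNat 4, ← ENNReal.ofReal_mul zero_le_four]
    exact ENNReal.ofReal_le_ofReal (by linarith)
  have he : 4 * ENNReal.ofReal ε < eSpace M := by
    rwa [mul_comm, ← ENNReal.lt_div_iff_mul_lt (by simp) (by simp)]
  exact hR.subset_of_disMS_add_lt hR' (hsum.trans_le hs) (hsum.trans he)

end Rigidity

theorem stmt_5_general {M X : Type*} [MetricSpace M] [MetricSpace X]
    (ε : ℝ) (hε1 : ε ≤ sSpace M / 4) (hε2 : ENNReal.ofReal ε < eSpace M / 4) :
    (∀ R R' : Set (M × X), IsCorr R → IsCorr R' →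
      disMS R < ENNReal.ofReal (2 * ε) → disMS R' < ENNReal.ofReal (2 * ε) → R = R') ∧
    ∀ R : Set (M × X), IsCorr R → disMS R < ENNReal.ofReal (2 * ε) →
      disMS R = ⨅ S ∈ {S : Set (M × X) | IsCorr S}, disMS S := by
  have hunique : ∀ R R' : Set (M × X), IsCorr R → IsCorr R' →
      disMS R < ENNReal.ofReal (2 * ε) → disMS R' < ENNReal.ofReal (2 * ε) → R = R' :=
    fun R R' hR hR' hdR hdR' => (hR.subset_of_disMS_lt ε hε1 hε2 hR' hdR hdR').antisymm
      (hR'.subset_of_disMS_lt ε hε1 hε2 hR hdR' hdR)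
  refine ⟨hunique, fun R hR hdR => le_antisymm (le_iInf₂ fun S hS => ?_) (iInf₂_le R hR)⟩
  by_cases hdS : disMS S < ENNReal.ofReal (2 * ε)
  · rw [hunique R S hR hS hdR hdS]
  · exact hdR.le.trans (not_lt.1 hdS)

/-- If `M` is totally discrete and totally asymmetric, `0 < ε ≤ s(M)/4`, `ε < e(M)/4`,
then any two correspondences between `M` and `X` of distortion `< 2ε` coincide, and such a
correspondence is optimal: its distortion equals `inf{dis S} = 2 d_GH(M,X)`. -/
theorem stmt_5 {M X : Type*} [MetricSpace M] [MetricSpace X]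
    (hM : ∃ x y z : M, x ≠ y ∧ x ≠ z ∧ y ≠ z)
    (hs : 0 < sSpace M) (he : 0 < eSpace M)
    (ε : ℝ) (hε0 : 0 < ε) (hε1 : ε ≤ sSpace M / 4) (hε2 : ENNReal.ofReal ε < eSpace M / 4) :
    (∀ R R' : Set (M × X), IsCorr R → IsCorr R' →
      disMS R < ENNReal.ofReal (2 * ε) → disMS R' < ENNReal.ofReal (2 * ε) → R = R') ∧
    ∀ R : Set (M × X), IsCorr R → disMS R < ENNReal.ofReal (2 * ε) →
      disMS R = ⨅ S ∈ {S : Set (M × X) | IsCorr S}, disMS S :=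
  stmt_5_general ε hε1 hε2
end

section
/- Let M be a metric space with at least 3 points and s(M) > 0, and let ε be a real number with 0 < ε ≤ s(M)/8. Let X and Y be metric spaces admitting correspondences R_X between M and X and R_Y between M and Y with dis R_X < 2ε and dis R_Y < 2ε; put X_i = R_X(i) and Y_i = R_Y(i) for i ∈ M (the canonical partitions). Then: (1) there exists a correspondence R between X and Y with dis R < 4ε; and (2) for every correspondence R between X and Y with dis R < 4ε there exists a bijection σ : M → M such that for all (x,y) ∈ R and all i ∈ M one has x ∈ X_i if and only if y ∈ Y_{σ(i)}; that is, R decomposes as a disjoint union R = ⊔_{i∈M} R_i with R_i a correspondence between X_i and Y_{σ(i)}. -/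
open ENNReal

lemma le_disMS {A B : Type*} [MetricSpace A] [MetricSpace B] {σ : Set (A × B)}
    {p q : A × B} (hp : p ∈ σ) (hq : q ∈ σ) :
    ENNReal.ofReal |dist p.1 q.1 - dist p.2 q.2| ≤ disMS σ := by
  unfold disMS
  exact le_iSup₂_of_le p hp (le_iSup₂_of_le q hq le_rfl)

lemma disMS_lt {A B : Type*} [MetricSpace A] [MetricSpace B] {σ : Set (A × B)}
    {c : ℝ} (hc : 0 < c) (h : disMS σ < ENNReal.ofReal c)
    {p q : A × B} (hp : p ∈ σ) (hq : q ∈ σ) :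
    |dist p.1 q.1 - dist p.2 q.2| < c := by
  have h1 := (le_disMS hp hq).trans_lt h
  rwa [ENNReal.ofReal_lt_ofReal_iff hc] at h1

lemma sSpace_le {M : Type*} [MetricSpace M] {x y : M} (h : x ≠ y) :
    sSpace M ≤ dist x y := by
  apply csInf_le
  · exact ⟨0, by rintro r ⟨a, b, hab, rfl⟩; exact dist_nonneg⟩
  · exact ⟨x, y, h, rfl⟩

/-- Let `M` be totally discrete with at least 3 points, `0 < ε ≤ s(M)/8`, and let `X`, `Y`
admit correspondences with `M` of distortion `< 2ε` (defining the canonical partitions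
`X_i = R_X(i)`, `Y_i = R_Y(i)`). Then there is a correspondence between `X` and `Y` of
distortion `< 4ε`, and every such correspondence splits along the canonical partitions up
to a bijection `σ : M → M`: for `(x,y) ∈ R`, `x ∈ X_i ↔ y ∈ Y_{σ i}`. -/
theorem stmt_6 {M X Y : Type*} [MetricSpace M] [MetricSpace X] [MetricSpace Y]
    (hM : ∃ x y z : M, x ≠ y ∧ x ≠ z ∧ y ≠ z) (hs : 0 < sSpace M)
    (ε : ℝ) (hε0 : 0 < ε) (hε : ε ≤ sSpace M / 8)
    (RX : Set (M × X)) (hRX : IsCorr RX) (hdX : disMS RX < ENNReal.ofReal (2 * ε))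
    (RY : Set (M × Y)) (hRY : IsCorr RY) (hdY : disMS RY < ENNReal.ofReal (2 * ε)) :
    (∃ R : Set (X × Y), IsCorr R ∧ disMS R < ENNReal.ofReal (4 * ε)) ∧
    ∀ R : Set (X × Y), IsCorr R → disMS R < ENNReal.ofReal (4 * ε) →
      ∃ σ : M ≃ M, ∀ x y, (x, y) ∈ R → ∀ i : M, ((i, x) ∈ RX ↔ (σ i, y) ∈ RY) := by
  have h2ε : (0:ℝ) < 2 * ε := by linarith
  have h4ε : (0:ℝ) < 4 * ε := by linarith
  have hsε : 8 * ε ≤ sSpace M := by linarith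
  have hXlt : ∀ p ∈ RX, ∀ q ∈ RX, |dist p.1 q.1 - dist p.2 q.2| < 2 * ε :=
    fun p hp q hq => disMS_lt h2ε hdX hp hq
  have hYlt : ∀ p ∈ RY, ∀ q ∈ RY, |dist p.1 q.1 - dist p.2 q.2| < 2 * ε :=
    fun p hp q hq => disMS_lt h2ε hdY hp hq
  -- uniqueness of the M-label
  have uniqX : ∀ (i j : M) (x : X), (i, x) ∈ RX → (j, x) ∈ RX → i = j := by
    intro i j x hi hj
    by_contra hne
    have h1 := hXlt (i, x) hi (j, x) hj
    simp only [dist_self, sub_zero] at h1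
    rw [abs_of_nonneg dist_nonneg] at h1
    have h2 := sSpace_le hne
    linarith
  have uniqY : ∀ (i j : M) (y : Y), (i, y) ∈ RY → (j, y) ∈ RY → i = j := by
    intro i j y hi hj
    by_contra hne
    have h1 := hYlt (i, y) hi (j, y) hj
    simp only [dist_self, sub_zero] at h1
    rw [abs_of_nonneg dist_nonneg] at h1
    have h2 := sSpace_le hne
    linarith
  choose fX hfX using hRX.2
  choose fY hfY using hRY.2
  choose gX hgX using hRX.1
  choose gY hgY using hRY.1
  have memX : ∀ (i : M) (x : X), (i, x) ∈ RX ↔ fX x = i := by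
    intro i x
    constructor
    · intro h; exact uniqX _ _ _ (hfX x) h
    · rintro rfl; exact hfX x
  have memY : ∀ (i : M) (y : Y), (i, y) ∈ RY ↔ fY y = i := by
    intro i y
    constructor
    · intro h; exact uniqY _ _ _ (hfY y) h
    · rintro rfl; exact hfY y
  have fgX : ∀ i : M, fX (gX i) = i := fun i => (memX i (gX i)).1 (hgX i)
  have fgY : ∀ i : M, fY (gY i) = i := fun i => (memY i (gY i)).1 (hgY i)
  constructor
  · -- existence of a correspondence of distortion < 4ε
    refine ⟨{p : X × Y | fX p.1 = fY p.2}, ⟨?_, ?_⟩, ?_⟩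
    · intro x; exact ⟨gY (fX x), by simp [Set.mem_setOf_eq, fgY]⟩
    · intro y; exact ⟨gX (fY y), by simp [Set.mem_setOf_eq, fgX]⟩
    · have hle : disMS {p : X × Y | fX p.1 = fY p.2} ≤ disMS RX + disMS RY := by
        unfold disMS
        refine iSup₂_le fun p hp => iSup₂_le fun q hq => ?_
        have hp' : fX p.1 = fY p.2 := hp
        have hq' : fX q.1 = fY q.2 := hq
        have key : |dist p.1 q.1 - dist p.2 q.2| ≤
            |dist (fX p.1) (fX q.1) - dist p.1 q.1| +
            |dist (fY p.2) (fY q.2) - dist p.2 q.2| := by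
          rw [← hp', ← hq']
          calc |dist p.1 q.1 - dist p.2 q.2|
              ≤ |dist p.1 q.1 - dist (fX p.1) (fX q.1)| +
                |dist (fX p.1) (fX q.1) - dist p.2 q.2| := abs_sub_le _ _ _
            _ = |dist (fX p.1) (fX q.1) - dist p.1 q.1| +
                |dist (fX p.1) (fX q.1) - dist p.2 q.2| := by rw [abs_sub_comm]
        calc ENNReal.ofReal |dist p.1 q.1 - dist p.2 q.2|
            ≤ ENNReal.ofReal (|dist (fX p.1) (fX q.1) - dist p.1 q.1| +
                |dist (fY p.2) (fY q.2) - dist p.2 q.2|) := ENNReal.ofReal_le_ofReal key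
          _ = ENNReal.ofReal |dist (fX p.1) (fX q.1) - dist p.1 q.1| +
              ENNReal.ofReal |dist (fY p.2) (fY q.2) - dist p.2 q.2| :=
                ENNReal.ofReal_add (abs_nonneg _) (abs_nonneg _)
          _ ≤ disMS RX + disMS RY :=
              add_le_add (le_disMS (hfX p.1) (hfX q.1)) (le_disMS (hfY p.2) (hfY q.2))
      calc disMS {p : X × Y | fX p.1 = fY p.2} ≤ disMS RX + disMS RY := hle
        _ < ENNReal.ofReal (2 * ε) + ENNReal.ofReal (2 * ε) := ENNReal.add_lt_add hdX hdY
        _ = ENNReal.ofReal (4 * ε) := by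
            rw [← ENNReal.ofReal_add h2ε.le h2ε.le]; congr 1; ring
  · intro R hR hdR
    have hRlt : ∀ p ∈ R, ∀ q ∈ R, |dist p.1 q.1 - dist p.2 q.2| < 4 * ε :=
      fun p hp q hq => disMS_lt h4ε hdR hp hq
    have stepX : ∀ x y x' y', (x, y) ∈ R → (x', y') ∈ R → fX x = fX x' → fY y = fY y' := by
      intro x y x' y' hxy hx'y' hf
      by_contra hne
      have hxx : dist x x' < 2 * ε := by
        have h1 := hXlt (fX x, x) (hfX x) (fX x', x') (hfX x')
        rw [hf, dist_self, zero_sub, abs_neg, abs_of_nonneg dist_nonneg] at h1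
        exact h1
      have hyy : 6 * ε < dist y y' := by
        have h1 := hYlt (fY y, y) (hfY y) (fY y', y') (hfY y')
        have h2 := sSpace_le hne
        have h3 := abs_lt.1 h1
        simp only at h3
        linarith
      have h3 := hRlt (x, y) hxy (x', y') hx'y'
      have h4 := abs_lt.1 h3
      simp only at h4
      linarith
    have stepY : ∀ x y x' y', (x, y) ∈ R → (x', y') ∈ R → fY y = fY y' → fX x = fX x' := by
      intro x y x' y' hxy hx'y' hf
      by_contra hne
      have hyy : dist y y' < 2 * ε := by
        have h1 := hYlt (fY y, y) (hfY y) (fY y', y') (hfY y')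
        rw [hf, dist_self, zero_sub, abs_neg, abs_of_nonneg dist_nonneg] at h1
        exact h1
      have hxx : 6 * ε < dist x x' := by
        have h1 := hXlt (fX x, x) (hfX x) (fX x', x') (hfX x')
        have h2 := sSpace_le hne
        have h3 := abs_lt.1 h1
        simp only at h3
        linarith
      have h3 := hRlt (x, y) hxy (x', y') hx'y'
      have h4 := abs_lt.1 h3
      simp only at h4
      linarith
    choose yc hyc using hR.1
    choose xc hxc using hR.2
    set σf : M → M := fun i => fY (yc (gX i)) with hσf
    set τf : M → M := fun j => fX (xc (gY j)) with hτf
    have hστ : ∀ i, τf (σf i) = i := by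
      intro i
      have h1 : fY (yc (gX i)) = fY (gY (σf i)) := by rw [fgY]
      have h2 := stepY _ _ _ _ (hyc (gX i)) (hxc (gY (σf i))) h1
      rw [fgX] at h2
      exact h2.symm
    have hτσ : ∀ j, σf (τf j) = j := by
      intro j
      have h1 : fX (gX (τf j)) = fX (xc (gY j)) := by rw [fgX]
      have h2 := stepX _ _ _ _ (hyc (gX (τf j))) (hxc (gY j)) h1
      rw [fgY] at h2
      exact h2
    refine ⟨⟨σf, τf, hστ, hτσ⟩, ?_⟩
    intro x y hxy i
    simp only [Equiv.coe_fn_mk]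
    rw [memX, memY]
    constructor
    · rintro rfl
      have h1 : fX x = fX (gX (fX x)) := (fgX (fX x)).symm
      simp only [hσf]
      exact stepX _ _ _ _ hxy (hyc (gX (fX x))) h1
    · intro h
      have h1 : fY y = fY (yc (gX i)) := h
      have h2 := stepY _ _ _ _ hxy (hyc (gX i)) h1
      rw [fgX] at h2
      exact h2
end

section
/- Let X be a nonempty bounded metric space. Then there exists a family (Z_x)_{x ∈ X} of metric spaces, each of cardinality equal to that of X when X is infinite, such that for all p, q ∈ X one has inf{dis R : R a correspondence between Z_p and Z_q} = 2·dist(p, q); that is, the map x ↦ Z_x is an isometric embedding of X into the Gromov–Hausdorff metric class (with d_GH(Z_p, Z_q) = dist(p, q) for all p, q ∈ X). -/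
open ENNReal

universe u

/-- A metric on a set `I`: symmetric, vanishing exactly on the diagonal, triangle inequality. -/
def IsMetric {I : Type*} (d : I → I → ℝ) : Prop :=
  (∀ x y, d x y = d y x) ∧ (∀ x y, d x y = 0 ↔ x = y) ∧ ∀ x y z, d x z ≤ d x y + d y z

/-- Distortion of a relation with respect to distance functions `dA` and `dB`. -/
noncomputable def disRel {A B : Type*} (dA : A → A → ℝ) (dB : B → B → ℝ)
    (σ : Set (A × B)) : ℝ≥0∞ :=
  ⨆ p ∈ σ, ⨆ q ∈ σ, ENNReal.ofReal |dA p.1 q.1 - dB p.2 q.2|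


/-!
Fix a well-order `<` on `X` and a bound `D > 0` for its distances. For each `a : X`, a metric
with finitely many values on `Gadget X` encodes the initial segment `{x | x < a}`; an isometry
between the gadgets of `a` and `b` induces an order isomorphism of their initial segments, so
`a = b`. The space `Z_x` is `X × Gadget X`: its block `{a} × Gadget X` carries the gadget of `a`
scaled by `64 D + 2 dist a x`, and distinct blocks `a ≠ b` are `68 D + dist a b` apart.

The identity correspondence has distortion at most `2 dist p q`. Conversely, a correspondence of
smaller distortion is the graph of a bijection, which maps blocks onto blocks and, as gadget
distances take finitely many well separated values, restricts to isometries of gadgets. Hence it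
maps the block of `p` onto itself; there the two markers are `64 D` apart in `Z_p` but
`64 D + 2 dist p q` apart in `Z_q`, a contradiction.
-/

theorem IsMetric.nonneg {I : Type*} {d : I → I → ℝ} (hd : IsMetric d) (x y : I) :
    0 ≤ d x y := by
  have := hd.2.2 x y x
  rw [(hd.2.1 x x).mpr rfl, hd.1 y x] at this
  linarith

section Correspondence

variable {A B : Type*} {dA : A → A → ℝ} {dB : B → B → ℝ}

theorem isCorr_diagonal : IsCorr (Set.diagonal A) :=
  ⟨fun a => ⟨a, rfl⟩, fun b => ⟨b, rfl⟩⟩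

theorem disRel_diagonal_le {dA' : A → A → ℝ} {c : ℝ}
    (h : ∀ z w, |dA z w - dA' z w| ≤ c) :
    disRel dA dA' (Set.diagonal A) ≤ ENNReal.ofReal c :=
  iSup₂_le fun z hz => iSup₂_le fun w hw => by
    rw [← show z.1 = z.2 from hz, ← show w.1 = w.2 from hw]
    exact ENNReal.ofReal_le_ofReal (h _ _)

theorem ofReal_abs_sub_le_disRel {R : Set (A × B)} {x x' : A} {y y' : B} (hy : (x, y) ∈ R)
    (hy' : (x', y') ∈ R) : ENNReal.ofReal |dA x x' - dB y y'| ≤ disRel dA dB R :=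
  le_iSup₂_of_le (x, y) hy <|
    le_iSup₂_of_le (f := fun q (_ : q ∈ R) => ENNReal.ofReal |dA x q.1 - dB y q.2|)
      (x', y') hy' le_rfl

theorem abs_sub_lt_of_disRel_lt {R : Set (A × B)} {c : ℝ}
    (h : disRel dA dB R < ENNReal.ofReal c) {x x' : A} {y y' : B} (hy : (x, y) ∈ R)
    (hy' : (x', y') ∈ R) : |dA x x' - dB y y'| < c :=
  (ENNReal.ofReal_lt_ofReal_iff_of_nonneg (abs_nonneg _)).mp <|
    (ofReal_abs_sub_le_disRel hy hy').trans_lt h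

theorem IsCorr.exists_equiv {R : Set (A × B)} {δ : ℝ} (hR : IsCorr R)
    (hA : ∀ x x', x ≠ x' → δ ≤ dA x x') (hB : ∀ y y', y ≠ y' → δ ≤ dB y y')
    (hA0 : ∀ x, dA x x = 0) (hB0 : ∀ y, dB y y = 0)
    (hdis : ∀ {x x' y y'}, (x, y) ∈ R → (x', y') ∈ R → |dA x x' - dB y y'| < δ) :
    ∃ φ : A ≃ B, ∀ x, (x, φ x) ∈ R := by
  choose φ hφ using hR.1
  choose ψ hψ using hR.2
  have hright {x y y'} (h : (x, y) ∈ R) (h' : (x, y') ∈ R) : y = y' := by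
    by_contra hne
    have := hdis h h'
    rw [hA0, zero_sub, abs_neg] at this
    exact (hB y y' hne).not_gt ((le_abs_self _).trans_lt this)
  have hleft {x x' y} (h : (x, y) ∈ R) (h' : (x', y) ∈ R) : x = x' := by
    by_contra hne
    have := hdis h h'
    rw [hB0, sub_zero] at this
    exact (hA x x' hne).not_gt ((le_abs_self _).trans_lt this)
  exact ⟨⟨φ, ψ, fun x => hleft (hψ (φ x)) (hφ x), fun y => hright (hφ (ψ y)) (hψ y)⟩,
    hφ⟩

end Correspondence

theorem Equiv.bijective_snd_of_fst_iff {α β T : Type*} (φ : α × T ≃ β × T) {a : α}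
    {b : β} (h : ∀ z, z.1 = a ↔ (φ z).1 = b) : Function.Bijective fun u => (φ (a, u)).2 := by
  refine ⟨fun u v huv => ?_, fun v => ⟨(φ.symm (b, v)).2, ?_⟩⟩
  · have := φ.injective (Prod.ext (((h _).mp rfl).trans ((h _).mp rfl).symm) huv)
    exact congrArg Prod.snd this
  · have ha : (a, (φ.symm (b, v)).2) = φ.symm (b, v) :=
      Prod.ext ((h _).mpr (by simp)).symm rfl
    simp [ha]

inductive Gadget (α : Type u) : Type u
  | root
  | marker (i : Bool)
  | vertex (x : α)
  | edge (x y : α)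

namespace Gadget

variable {α : Type u}

def equivOptionSum : Gadget α ≃ Option (Bool ⊕ α ⊕ α × α) where
  toFun
    | root => none
    | marker i => some (.inl i)
    | vertex x => some (.inr (.inl x))
    | edge x y => some (.inr (.inr (x, y)))
  invFun
    | none => root
    | some (.inl i) => marker i
    | some (.inr (.inl x)) => vertex x
    | some (.inr (.inr (x, y))) => edge x y
  left_inv u := by cases u <;> rfl
  right_inv o := by rcases o with _ | _ | _ | ⟨_, _⟩ <;> rfl

theorem mk_eq [Infinite α] : Cardinal.mk (Gadget α) = Cardinal.mk α := by
  have h := Cardinal.aleph0_le_mk α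
  rw [Cardinal.mk_congr equivOptionSum]
  simp only [Cardinal.mk_option, Cardinal.mk_sum, Cardinal.mk_fintype, Fintype.card_bool,
    Nat.cast_ofNat, Cardinal.lift_ofNat, Cardinal.lift_id, Cardinal.mk_prod,
    Cardinal.mul_eq_self h, Cardinal.add_eq_self h, Cardinal.lift_uzero]
  rw [Cardinal.add_one_eq (h.trans le_add_self),
    Cardinal.add_eq_right h (Cardinal.ofNat_le_aleph0.trans h)]

variable (r : α → α → Prop) (a : α)

/- `gadgetDist r a`, the symmetrization of `bond r a` by `min`, encodes `{x | r x a}`: the root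
is at `9/16` from both markers and at `1/2` from each vertex `x` with `r x a`; an edge `(x, y)`
with `r x y` and `r y a` is at `5/8` from `x` and at `3/4` from `y`. All other pairs of distinct
points are at distance `1`. -/
open Classical in
noncomputable def bond : Gadget α → Gadget α → ℝ
  | root, marker _ => 9/16
  | root, vertex x => if r x a then 1/2 else 1
  | vertex x, edge y z =>
    if r y z ∧ r z a then (if x = y then 5/8 else if x = z then 3/4 else 1) else 1
  | _, _ => 1

variable {r a}

theorem bond_mem (u v : Gadget α) :
    bond r a u v ∈ ({1/2, 9/16, 5/8, 3/4, 1} : Set ℝ) := by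
  cases u <;> cases v <;> simp only [bond] <;> (try split_ifs) <;> norm_num

theorem bond_mem_Icc (u v : Gadget α) : bond r a u v ∈ Set.Icc (1/2 : ℝ) 1 := by
  have h := bond_mem (r := r) (a := a) u v
  simp only [Set.mem_insert_iff, Set.mem_singleton_iff] at h
  rcases h with h | h | h | h | h <;> rw [h] <;> norm_num

end Gadget

section GadgetDist

open Gadget

variable {α : Type u} (r : α → α → Prop) (a : α)

open Classical in
noncomputable def gadgetDist (u v : Gadget α) : ℝ :=
  if u = v then 0 else min (bond r a u v) (bond r a v u)

variable {r a}

theorem gadgetDist_self (u : Gadget α) : gadgetDist r a u u = 0 := if_pos rfl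

theorem gadgetDist_of_ne {u v : Gadget α} (h : u ≠ v) :
    gadgetDist r a u v = min (bond r a u v) (bond r a v u) := if_neg h

theorem gadgetDist_comm (u v : Gadget α) : gadgetDist r a u v = gadgetDist r a v u := by
  by_cases h : u = v
  · rw [h]
  · rw [gadgetDist_of_ne h, gadgetDist_of_ne (Ne.symm h), min_comm]

theorem gadgetDist_mem (u v : Gadget α) :
    gadgetDist r a u v ∈ ({0, 1/2, 9/16, 5/8, 3/4, 1} : Set ℝ) := by
  by_cases h : u = v
  · simp [h, gadgetDist_self]
  · rw [gadgetDist_of_ne h]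
    rcases min_choice (bond r a u v) (bond r a v u) with h' | h' <;> rw [h'] <;>
      exact Set.mem_insert_of_mem _ (bond_mem _ _)

theorem half_le_gadgetDist {u v : Gadget α} (h : u ≠ v) : 1/2 ≤ gadgetDist r a u v := by
  rw [gadgetDist_of_ne h]
  exact le_min (bond_mem_Icc u v).1 (bond_mem_Icc v u).1

theorem gadgetDist_le_one (u v : Gadget α) : gadgetDist r a u v ≤ 1 := by
  by_cases h : u = v
  · rw [h, gadgetDist_self]; norm_num
  · rw [gadgetDist_of_ne h]
    exact (min_le_left _ _).trans (bond_mem_Icc u v).2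

theorem isMetric_gadgetDist : IsMetric (gadgetDist r a) := by
  refine ⟨gadgetDist_comm, fun u v => ⟨fun h => ?_, fun h => h ▸ gadgetDist_self u⟩,
    fun u v w => ?_⟩
  · by_contra hne
    linarith [half_le_gadgetDist (r := r) (a := a) hne]
  · by_cases huv : u = v
    · rw [huv, gadgetDist_self, zero_add]
    by_cases hvw : v = w
    · rw [hvw, gadgetDist_self, add_zero]
    linarith [gadgetDist_le_one (r := r) (a := a) u w, half_le_gadgetDist (r := r) (a := a) huv,
      half_le_gadgetDist (r := r) (a := a) hvw]

theorem gadgetDist_root_marker (i : Bool) : gadgetDist r a root (marker i) = 9/16 := by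
  simp [gadgetDist, bond]; norm_num

theorem gadgetDist_root_vertex {x : α} (hx : r x a) :
    gadgetDist r a root (vertex x) = 1/2 := by
  simp [gadgetDist, bond, hx]; norm_num

theorem gadgetDist_vertex_edge_left {x y : α} (hxy : r x y) (hy : r y a) :
    gadgetDist r a (vertex x) (edge x y) = 5/8 := by
  simp [gadgetDist, bond, hxy, hy]; norm_num

theorem gadgetDist_vertex_edge_right {x y : α} (hxy : r x y) (hy : r y a) (hne : x ≠ y) :
    gadgetDist r a (vertex y) (edge x y) = 3/4 := by
  simp [gadgetDist, bond, hxy, hy, hne.symm]; norm_num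

theorem eq_root_of_gadgetDist_eq {u v : Gadget α} (h : gadgetDist r a u v = 9/16) :
    u = root ∨ v = root := by
  cases u <;> cases v <;> simp only [gadgetDist, bond] at h <;> split_ifs at h <;>
    norm_num [min_def] at h <;> simp_all

theorem exists_vertex_of_gadgetDist_root {u : Gadget α} (h : gadgetDist r a root u = 1/2) :
    ∃ x, r x a ∧ u = vertex x := by
  cases u <;> simp only [gadgetDist, bond] at h <;> split_ifs at h <;>
    norm_num [min_def] at h <;> simp_all

theorem rel_of_gadgetDist_vertex {x y : α} {u : Gadget α}
    (h₁ : gadgetDist r a (vertex x) u = 5/8) (h₂ : gadgetDist r a (vertex y) u = 3/4) :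
    r x y := by
  cases u <;> simp only [gadgetDist, bond] at h₁ h₂ <;> split_ifs at h₁ h₂ <;>
    norm_num [min_def] at * <;> simp_all

theorem eq_of_gadgetDist_isometry [IsWellOrder α r] {a b : α} {f : Gadget α → Gadget α}
    (hf : Function.Bijective f)
    (hiso : ∀ u v, gadgetDist r b (f u) (f v) = gadgetDist r a u v) : a = b := by
  have hroot : f root = root := by
    have h (i : Bool) : f root = root ∨ f (marker i) = root :=
      eq_root_of_gadgetDist_eq (by rw [hiso, gadgetDist_root_marker])
    by_contra hne
    have := hf.1 (((h true).resolve_left hne).trans ((h false).resolve_left hne).symm)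
    simp at this
  have hvertex (x : {x // r x a}) : ∃ y : {y // r y b}, f (vertex x) = vertex (y : α) := by
    obtain ⟨y, hy, h⟩ := exists_vertex_of_gadgetDist_root (r := r) (a := b)
      (by rw [← hroot, hiso, gadgetDist_root_vertex x.2])
    exact ⟨⟨y, hy⟩, h⟩
  choose g hg using hvertex
  have hmono (x x' : {x // r x a}) (h : r x x') : r (g x) (g x') :=
    rel_of_gadgetDist_vertex (u := f (edge x x'))
      (by rw [← hg, hiso, gadgetDist_vertex_edge_left h x'.2])
      (by rw [← hg, hiso, gadgetDist_vertex_edge_right h x'.2 (ne_of_irrefl h)])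
  have hsurj : Function.Surjective g := fun y => by
    obtain ⟨w, hw⟩ := hf.2 (vertex (y : α))
    obtain ⟨x, hx, rfl⟩ := exists_vertex_of_gadgetDist_root (r := r) (a := a) (u := w)
      (by rw [← hiso, hroot, hw, gadgetDist_root_vertex y.2])
    exact ⟨⟨x, hx⟩, Subtype.ext (vertex.inj ((hg _).symm.trans hw))⟩
  have e : Subrel r (r · a) ≃r Subrel r (r · b) :=
    RelIso.ofSurjective (RelEmbedding.ofMonotone g hmono) hsurj
  exact (Ordinal.typein_inj r).mp e.ordinalType_congr

/- Distinct values are at least `1/16` apart, so `|s * (v - w)| ≥ 4 D`, which exceeds the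
scale error `|(s - t) * w| ≤ 2 D` by `2 D`. -/
theorem eq_of_abs_mul_sub_mul_lt {s t v w D : ℝ} (hs : 64 * D ≤ s) (hs' : s ≤ 66 * D)
    (ht : 64 * D ≤ t) (ht' : t ≤ 66 * D) (hv : v ∈ ({0, 1/2, 9/16, 5/8, 3/4, 1} : Set ℝ))
    (hw : w ∈ ({0, 1/2, 9/16, 5/8, 3/4, 1} : Set ℝ)) (h : |s * v - t * w| < 2 * D) :
    v = w := by
  obtain ⟨h₁, h₂⟩ := abs_lt.mp h
  simp only [Set.mem_insert_iff, Set.mem_singleton_iff] at hv hw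
  rcases hv with rfl | rfl | rfl | rfl | rfl | rfl <;>
    rcases hw with rfl | rfl | rfl | rfl | rfl | rfl <;>
    first | rfl | (exfalso; linarith)

end GadgetDist

section Glued

variable {X : Type u} [MetricSpace X] {T : Type*}

open Classical in
noncomputable def gluedDist (ρ : X → T → T → ℝ) (D : ℝ) (x : X) (z w : X × T) : ℝ :=
  if z.1 = w.1 then (64 * D + 2 * dist z.1 x) * ρ z.1 z.2 w.2 else 68 * D + dist z.1 w.1

variable {ρ : X → T → T → ℝ} {D : ℝ}

theorem gluedDist_mk_same (x a : X) (u v : T) :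
    gluedDist ρ D x (a, u) (a, v) = (64 * D + 2 * dist a x) * ρ a u v := if_pos rfl

theorem gluedDist_mk_of_ne (x : X) {a b : X} (u v : T) (h : a ≠ b) :
    gluedDist ρ D x (a, u) (b, v) = 68 * D + dist a b := if_neg h

theorem fst_eq_of_gluedDist_lt {x : X} {z w : X × T} (h : gluedDist ρ D x z w < 68 * D) :
    z.1 = w.1 := by
  obtain ⟨a, u⟩ := z
  obtain ⟨b, v⟩ := w
  by_contra hne
  rw [gluedDist_mk_of_ne x u v hne] at h
  linarith [dist_nonneg (x := a) (y := b)]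

theorem gluedDist_le_of_fst_eq (hρ1 : ∀ a u v, ρ a u v ≤ 1)
    (hdist : ∀ a b : X, dist a b ≤ D) (x : X) {z w : X × T} (h : z.1 = w.1) :
    gluedDist ρ D x z w ≤ 66 * D := by
  obtain ⟨a, u⟩ := z
  obtain ⟨b, v⟩ := w
  obtain rfl : a = b := h
  rw [gluedDist_mk_same]
  have := hdist a x
  have := dist_nonneg (x := a) (y := x)
  nlinarith [hρ1 a u v]

theorem le_gluedDist_of_ne (hρ : ∀ a u v, u ≠ v → 1/2 ≤ ρ a u v) (hD : 0 ≤ D) (x : X)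
    {z w : X × T} (h : z ≠ w) : 32 * D ≤ gluedDist ρ D x z w := by
  obtain ⟨a, u⟩ := z
  obtain ⟨b, v⟩ := w
  by_cases hab : a = b
  · subst hab
    rw [gluedDist_mk_same]
    have := hρ a u v (fun huv => h (huv ▸ rfl))
    have := dist_nonneg (x := a) (y := x)
    nlinarith
  · rw [gluedDist_mk_of_ne x _ _ hab]
    linarith [dist_nonneg (x := a) (y := b)]

theorem abs_gluedDist_sub_le (hρ0 : ∀ a u v, 0 ≤ ρ a u v) (hρ1 : ∀ a u v, ρ a u v ≤ 1)
    (p q : X) (z w : X × T) :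
    |gluedDist ρ D p z w - gluedDist ρ D q z w| ≤ 2 * dist p q := by
  obtain ⟨a, u⟩ := z
  obtain ⟨b, v⟩ := w
  by_cases hab : a = b
  · subst hab
    rw [gluedDist_mk_same, gluedDist_mk_same, ← sub_mul, abs_mul, abs_of_nonneg (hρ0 a u v),
      show 64 * D + 2 * dist a p - (64 * D + 2 * dist a q) = 2 * (dist a p - dist a q) by ring,
      abs_mul, abs_two]
    have := abs_dist_sub_le p q a
    rw [dist_comm p a, dist_comm q a] at this
    nlinarith [abs_nonneg (dist a p - dist a q), hρ0 a u v, hρ1 a u v]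
  · rw [gluedDist_mk_of_ne p _ _ hab, gluedDist_mk_of_ne q _ _ hab, sub_self, abs_zero]
    positivity

theorem isMetric_gluedDist (hρ : ∀ a, IsMetric (ρ a)) (hρ1 : ∀ a u v, ρ a u v ≤ 1)
    (hD : 0 < D) (hdist : ∀ a b : X, dist a b ≤ D) (x : X) : IsMetric (gluedDist ρ D x) := by
  have hscale (a : X) : 0 < 64 * D + 2 * dist a x := by positivity
  have hsame (a : X) (u v : T) : 0 ≤ gluedDist ρ D x (a, u) (a, v) := by
    rw [gluedDist_mk_same]; exact mul_nonneg (hscale a).le ((hρ a).nonneg u v)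
  refine ⟨?_, ?_, ?_⟩
  · rintro ⟨a, u⟩ ⟨b, v⟩
    by_cases hab : a = b
    · subst hab; rw [gluedDist_mk_same, gluedDist_mk_same, (hρ a).1]
    · rw [gluedDist_mk_of_ne x _ _ hab, gluedDist_mk_of_ne x v u (Ne.symm hab), dist_comm]
  · rintro ⟨a, u⟩ ⟨b, v⟩
    by_cases hab : a = b
    · subst hab
      rw [gluedDist_mk_same, mul_eq_zero, or_iff_right (hscale a).ne', (hρ a).2.1, Prod.mk.injEq]
      simp
    · rw [gluedDist_mk_of_ne x _ _ hab]
      have := dist_nonneg (x := a) (y := b)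
      exact iff_of_false (by positivity) fun h => hab (congrArg Prod.fst h)
  · rintro ⟨a, u⟩ ⟨b, v⟩ ⟨c, w⟩
    by_cases hab : a = b <;> by_cases hbc : b = c
    · subst hab hbc
      simp only [gluedDist_mk_same, ← mul_add]
      exact mul_le_mul_of_nonneg_left ((hρ a).2.2 u v w) (hscale a).le
    · subst hab
      rw [gluedDist_mk_of_ne x u w hbc, gluedDist_mk_of_ne x v w hbc]
      linarith [hsame a u v]
    · subst hbc
      rw [gluedDist_mk_of_ne x u w hab, gluedDist_mk_of_ne x u v hab]
      linarith [hsame b v w]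
    · rw [gluedDist_mk_of_ne x u v hab, gluedDist_mk_of_ne x v w hbc]
      by_cases hac : a = c
      · subst hac
        linarith [gluedDist_le_of_fst_eq hρ1 hdist x (z := (a, u)) (w := (a, w)) rfl,
          dist_nonneg (x := a) (y := b), dist_nonneg (x := b) (y := a)]
      · rw [gluedDist_mk_of_ne x u w hac]
        linarith [dist_triangle a b c]

theorem fst_eq_iff_of_abs_gluedDist_sub_lt (hρ1 : ∀ a u v, ρ a u v ≤ 1)
    (hdist : ∀ a b : X, dist a b ≤ D) {p q : X} (φ : X × T ≃ X × T)
    (hφ : ∀ z w, |gluedDist ρ D p z w - gluedDist ρ D q (φ z) (φ w)| < 2 * D)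
    (a : X) (u₀ : T) (z : X × T) : z.1 = a ↔ (φ z).1 = (φ (a, u₀)).1 := by
  have h := abs_lt.mp (hφ z (a, u₀))
  constructor
  · intro hz
    refine fst_eq_of_gluedDist_lt (ρ := ρ) (D := D) (x := q) ?_
    linarith [gluedDist_le_of_fst_eq hρ1 hdist p (z := z) (w := (a, u₀)) hz]
  · intro hz
    refine fst_eq_of_gluedDist_lt (ρ := ρ) (D := D) (x := p) (w := (a, u₀)) ?_
    linarith [gluedDist_le_of_fst_eq hρ1 hdist q hz]

end Glued

section LowerBound

open Gadget

variable {X : Type u} [MetricSpace X] {D : ℝ}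

local notation "dZ" => gluedDist (gadgetDist (WellOrderingRel : X → X → Prop))

theorem two_mul_dist_le_disRel (hD : 0 < D) (hdist : ∀ a b : X, dist a b ≤ D) (p q : X)
    {R : Set ((X × Gadget X) × (X × Gadget X))} (hR : IsCorr R) :
    ENNReal.ofReal (2 * dist p q) ≤ disRel (dZ D p) (dZ D q) R := by
  by_contra! hlt
  have hc : 2 * dist p q ≤ 2 * D := by linarith [hdist p q]
  have hmetric (x : X) : IsMetric (dZ D x) :=
    isMetric_gluedDist (fun _ => isMetric_gadgetDist) (fun _ => gadgetDist_le_one) hD hdist x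
  have hsep (x : X) (z w : X × Gadget X) (h : z ≠ w) : 32 * D ≤ dZ D x z w :=
    le_gluedDist_of_ne (fun _ _ _ => half_le_gadgetDist) hD.le x h
  obtain ⟨φ, hφ⟩ := hR.exists_equiv (hsep p) (hsep q) (fun z => ((hmetric p).2.1 z z).mpr rfl)
    (fun z => ((hmetric q).2.1 z z).mpr rfl)
    fun hz hw => (abs_sub_lt_of_disRel_lt hlt hz hw).trans_le (by linarith)
  have hdis (z w) : |dZ D p z w - dZ D q (φ z) (φ w)| < 2 * dist p q :=
    abs_sub_lt_of_disRel_lt hlt (hφ z) (hφ w)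
  have hblock := fst_eq_iff_of_abs_gluedDist_sub_lt (fun _ => gadgetDist_le_one) hdist φ
    (fun z w => (hdis z w).trans_le hc) p root
  set b := (φ (p, root)).1
  set f := fun u => (φ (p, u)).2
  have hφf (u) : φ (p, u) = (b, f u) := Prod.ext ((hblock _).mp rfl) rfl
  have hiso (u v) :
      gadgetDist WellOrderingRel b (f u) (f v) = gadgetDist WellOrderingRel p u v := by
    have h := hdis (p, u) (p, v)
    rw [hφf, hφf, gluedDist_mk_same, gluedDist_mk_same, dist_self, mul_zero, add_zero] at h
    refine (eq_of_abs_mul_sub_mul_lt le_rfl (by linarith) ?_ ?_ (gadgetDist_mem _ _)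
      (gadgetDist_mem _ _) (h.trans_le hc)).symm
    · linarith [dist_nonneg (x := b) (y := q)]
    · linarith [hdist b q]
  have hbp : p = b := eq_of_gadgetDist_isometry (φ.bijective_snd_of_fst_iff hblock) hiso
  have hmarkers : gadgetDist WellOrderingRel p (marker true) (marker false) = 1 := by
    simp [gadgetDist, bond]
  have h := hdis (p, marker true) (p, marker false)
  rw [hφf, hφf, gluedDist_mk_same, gluedDist_mk_same, hiso, ← hbp, hmarkers, dist_self,
    dist_comm] at h
  linarith [abs_lt.mp h]

end LowerBound

theorem stmt_11_general {X : Type u} [MetricSpace X]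
    (hbdd : Bornology.IsBounded (Set.univ : Set X)) :
    ∃ (Z : X → Type u) (dZ : (x : X) → Z x → Z x → ℝ),
      (∀ x, IsMetric (dZ x)) ∧
      (Infinite X → ∀ x, Cardinal.mk (Z x) = Cardinal.mk X) ∧
      ∀ p q : X,
        (⨅ R ∈ {R : Set (Z p × Z q) | IsCorr R}, disRel (dZ p) (dZ q) R) =
          ENNReal.ofReal (2 * dist p q) := by
  obtain ⟨D, hD, hdist⟩ : ∃ D > 0, ∀ a b : X, dist a b ≤ D := by
    obtain ⟨C, hC⟩ := Metric.isBounded_iff.mp hbdd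
    exact ⟨max C 1, lt_max_of_lt_right one_pos,
      fun a b => (hC trivial trivial).trans (le_max_left _ _)⟩
  refine ⟨fun _ => X × Gadget X, gluedDist (gadgetDist WellOrderingRel) D,
    isMetric_gluedDist (fun _ => isMetric_gadgetDist) (fun _ => gadgetDist_le_one) hD hdist,
    fun _ _ => ?_, fun p q => le_antisymm ?_ ?_⟩
  · rw [Cardinal.mk_prod, Cardinal.lift_id, Cardinal.lift_id, Gadget.mk_eq,
      Cardinal.mul_eq_self (Cardinal.aleph0_le_mk X)]
  · exact iInf₂_le_of_le _ isCorr_diagonal <| disRel_diagonal_le <|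
      abs_gluedDist_sub_le (fun _ => isMetric_gadgetDist.nonneg) (fun _ => gadgetDist_le_one) p q
  · exact le_iInf₂ fun R hR => two_mul_dist_le_disRel hD hdist p q hR

/-- Every nonempty bounded metric space `X` embeds isometrically into the Gromov–Hausdorff
class: there is a family `(Z_x)_{x ∈ X}` of metric spaces (of cardinality equal to that of
`X` when `X` is infinite) with `2 d_GH(Z_p, Z_q) = inf{dis R : R correspondence} =
2 dist(p,q)` for all `p, q ∈ X`. -/
theorem stmt_11 {X : Type u} [MetricSpace X] [Nonempty X]
    (hbdd : Bornology.IsBounded (Set.univ : Set X)) :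
    ∃ (Z : X → Type u) (dZ : (x : X) → Z x → Z x → ℝ),
      (∀ x, IsMetric (dZ x)) ∧
      (Infinite X → ∀ x, Cardinal.mk (Z x) = Cardinal.mk X) ∧
      ∀ p q : X,
        (⨅ R ∈ {R : Set (Z p × Z q) | IsCorr R}, disRel (dZ p) (dZ q) R) =
          ENNReal.ofReal (2 * dist p q) :=
  stmt_11_general hbdd
end

section
/- There exists a bijection η : ℕ → ℕ such that sup_{m,n ∈ ℕ} ||η(m) − η(n)| − |m − n|| = ∞; that is, the metric space ℕ (with the distance inherited from ℝ) admits a self-bijection of infinite distortion, so the two enumerations give distance vectors lying in different clouds of the corresponding sup-metric space while projecting to the same metric space. (One such η maps 2^{n−1} to 2n−1 for each n ∈ ℕ and maps the complement of the powers of 2 bijectively onto the even numbers.) -/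
/-!
Transposing the coordinates of the Cantor pairing `ℕ × ℕ ≃ ℕ` has unbounded distortion:
`pair b b = b² + 2b` and `pair 0 (b + 1) = (b + 1)²` are adjacent, while their images
`pair b b` and `pair (b + 1) 0 = (b + 1)² + (b + 1)` lie `b + 2` apart.
-/

open ENNReal

noncomputable def distortion {α β : Type*} [PseudoMetricSpace α] [PseudoMetricSpace β]
    (f : α → β) : ℝ≥0∞ :=
  ⨆ a, ⨆ a', ENNReal.ofReal |dist (f a) (f a') - dist a a'|

theorem distortion_eq_top_of_forall_exists {α β : Type*} [PseudoMetricSpace α]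
    [PseudoMetricSpace β] {f : α → β}
    (h : ∀ C : ℕ, ∃ a a', (C : ℝ) ≤ |dist (f a) (f a') - dist a a'|) :
    distortion f = ⊤ := by
  refine top_unique ?_
  rw [← ENNReal.iSup_natCast]
  refine iSup_le fun C => ?_
  obtain ⟨a, a', hC⟩ := h C
  calc (C : ℝ≥0∞) = ENNReal.ofReal C := (ENNReal.ofReal_natCast C).symm
    _ ≤ ENNReal.ofReal |dist (f a) (f a') - dist a a'| := ENNReal.ofReal_le_ofReal hC
    _ ≤ distortion f := le_iSup₂_of_le a a' le_rfl

def pairSwap : ℕ ≃ ℕ :=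
  Nat.pairEquiv.symm.trans ((Equiv.prodComm ℕ ℕ).trans Nat.pairEquiv)

@[simp]
theorem pairSwap_pair (a b : ℕ) : pairSwap (Nat.pair a b) = Nat.pair b a := by
  simp [pairSwap]

theorem dist_pairSwap_sub_dist (b : ℕ) :
    dist (pairSwap (Nat.pair b b)) (pairSwap (Nat.pair 0 (b + 1)))
      - dist (Nat.pair b b) (Nat.pair 0 (b + 1)) = b + 1 := by
  have h₁ : Nat.pair b b = b * b + b + b := by simp [Nat.pair]
  have h₂ : Nat.pair 0 (b + 1) = (b + 1) * (b + 1) := by simp [Nat.pair]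
  have h₃ : Nat.pair (b + 1) 0 = (b + 1) * (b + 1) + (b + 1) := by simp [Nat.pair]
  rw [pairSwap_pair, pairSwap_pair, h₁, h₂, h₃, Nat.dist_eq, Nat.dist_eq]
  push_cast
  rw [abs_of_neg (by nlinarith), abs_of_neg (by nlinarith)]
  ring

theorem distortion_pairSwap : distortion pairSwap = ⊤ :=
  distortion_eq_top_of_forall_exists fun C =>
    ⟨_, _, by rw [dist_pairSwap_sub_dist, abs_of_pos (by positivity)]; linarith⟩

/-- The metric space `ℕ` (with the distance inherited from `ℝ`) admits a self-bijection of
infinite distortion: `sup_{m,n} ||η(m) - η(n)| - |m - n|| = ∞`. -/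
theorem stmt_16 :
    ∃ η : ℕ ≃ ℕ,
      (⨆ m : ℕ, ⨆ n : ℕ,
        ENNReal.ofReal (abs (abs ((η m : ℝ) - (η n : ℝ)) - abs ((m : ℝ) - (n : ℝ))))) = ⊤ :=
  ⟨pairSwap, distortion_pairSwap⟩
end
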